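/- arXiv:2005.07835 — 8 statements merged into one kernel-verified Lean document; each statement's English description precedes it below -/
import Mathlib

section
/- For any finite simple graph G with maximum degree Δ(G) ≥ k, where k ≥ 2 is an integer, the k-domination number satisfies γ_k(G) ≥ γ(G) + k − 2. -/
/-!
Let `D` be a minimum `k`-dominating set. If `D` is everything, then `γ(G) ≤ n - Δ(G) ≤ n - k`,
since the complement of the neighbourhood of a vertex of maximum degree is dominating.
Otherwise pick `u ∉ D`: it has at least `k` neighbours in `D`, and exchanging `k - 1` of them
for `u` yields a dominating set of size `|D| - k + 2`.
-/

/-- `D` is a `k`-dominating set of `G`: every vertex outside `D` has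
at least `k` neighbors in `D`. -/
def IsKDomSet {V : Type*} (G : SimpleGraph V) (k : ℕ) (D : Set V) : Prop :=
  ∀ v ∉ D, k ≤ (G.neighborSet v ∩ D).ncard

/-- The `k`-domination number: minimum cardinality of a `k`-dominating set. -/
noncomputable def kdomNum {V : Type*} (G : SimpleGraph V) (k : ℕ) : ℕ :=
  sInf {n | ∃ D : Set V, IsKDomSet G k D ∧ D.ncard = n}

section

variable {V : Type*} {G : SimpleGraph V}

theorem IsKDomSet.univ (G : SimpleGraph V) (k : ℕ) : IsKDomSet G k Set.univ :=
  fun _ hv => absurd (Set.mem_univ _) hv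

theorem kdomNum_le_ncard {k : ℕ} {D : Set V} (hD : IsKDomSet G k D) : kdomNum G k ≤ D.ncard :=
  Nat.sInf_le ⟨D, hD, rfl⟩

theorem exists_isKDomSet_ncard_eq_kdomNum (k : ℕ) :
    ∃ D, IsKDomSet G k D ∧ D.ncard = kdomNum G k :=
  Nat.sInf_mem (s := {n | ∃ D : Set V, IsKDomSet G k D ∧ D.ncard = n})
    ⟨_, Set.univ, IsKDomSet.univ G k, rfl⟩

variable [Finite V]

theorem isKDomSet_one_iff {D : Set V} :
    IsKDomSet G 1 D ↔ ∀ v ∉ D, ∃ w ∈ D, G.Adj v w := by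
  refine forall₂_congr fun v _ => ?_
  rw [Nat.one_le_iff_ne_zero, ← Nat.pos_iff_ne_zero, Set.ncard_pos]
  exact ⟨fun ⟨w, hvw, hw⟩ => ⟨w, hw, hvw⟩, fun ⟨w, hw, hvw⟩ => ⟨w, hvw, hw⟩⟩

theorem isKDomSet_one_compl_neighborSet (v : V) : IsKDomSet G 1 (G.neighborSet v)ᶜ := by
  refine isKDomSet_one_iff.2 fun w hw => ⟨v, ?_, G.adj_symm (not_not.1 hw)⟩
  simp

theorem IsKDomSet.isKDomSet_one_insert_sdiff {k : ℕ} {D A : Set V} {u : V}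
    (hD : IsKDomSet G k D) (hA : A ⊆ G.neighborSet u ∩ D) (hAk : A.ncard < k) :
    IsKDomSet G 1 (insert u (D \ A)) := by
  refine isKDomSet_one_iff.2 fun w hw => ?_
  simp only [Set.mem_insert_iff, Set.mem_sdiff, not_or, not_and_not_right] at hw
  obtain ⟨hwu, hwDA⟩ := hw
  by_cases hwA : w ∈ A
  · exact ⟨u, Set.mem_insert _ _, G.adj_symm (hA hwA).1⟩
  · have hwD : w ∉ D := fun h => hwA (hwDA h)
    obtain ⟨x, ⟨hwx, hxD⟩, hxA⟩ :=
      Set.sdiff_nonempty_of_ncard_lt_ncard (hAk.trans_le (hD w hwD))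
    exact ⟨x, Or.inr ⟨hxD, hxA⟩, hwx⟩

theorem IsKDomSet.kdomNum_one_add_sub_two_le {k : ℕ} {D : Set V} {u : V}
    (hD : IsKDomSet G k D) (hk : 2 ≤ k) (hu : u ∉ D) : kdomNum G 1 + (k - 2) ≤ D.ncard := by
  have hku := hD u hu
  obtain ⟨A, hA, hAcard⟩ :=
    Set.exists_subset_card_eq (s := G.neighborSet u ∩ D) (n := k - 1) (by omega)
  have hAD : A ⊆ D := hA.trans Set.inter_subset_right
  have hdom := hD.isKDomSet_one_insert_sdiff hA (by omega)
  have hcard : (insert u (D \ A)).ncard = D.ncard - (k - 1) + 1 := by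
    rw [Set.ncard_insert_of_notMem fun h => hu h.1, Set.ncard_sdiff hAD, hAcard]
  have hAle : k - 1 ≤ D.ncard := hAcard ▸ Set.ncard_le_ncard hAD
  have := kdomNum_le_ncard hdom
  omega

theorem kdomNum_one_add_maxDegree_le_card {V : Type*} [Fintype V]
    (G : SimpleGraph V) [DecidableRel G.Adj] : kdomNum G 1 + G.maxDegree ≤ Fintype.card V := by
  cases isEmpty_or_nonempty V
  · simpa [G.maxDegree_of_subsingleton] using kdomNum_le_ncard (IsKDomSet.univ G 1)
  obtain ⟨v, hv⟩ := G.exists_maximal_degree_vertex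
  have hcompl := Set.ncard_add_ncard_compl (G.neighborSet v)
  have hdeg : (G.neighborSet v).ncard = G.degree v := by
    rw [Set.ncard_eq_toFinset_card']
    rfl
  have := kdomNum_le_ncard (isKDomSet_one_compl_neighborSet (G := G) v)
  rw [Nat.card_eq_fintype_card] at hcompl
  omega

end

/-- For any finite simple graph `G` with `Δ(G) ≥ k ≥ 2`,
`γ_k(G) ≥ γ(G) + k − 2`. -/
theorem statement0 {V : Type*} [Fintype V] (G : SimpleGraph V) [DecidableRel G.Adj]
    (k : ℕ) (hk : 2 ≤ k) (hΔ : k ≤ G.maxDegree) :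
    kdomNum G 1 + (k - 2) ≤ kdomNum G k := by
  obtain ⟨D, hD, hDcard⟩ := exists_isKDomSet_ncard_eq_kdomNum (G := G) k
  rw [← hDcard]
  by_cases hU : D = Set.univ
  · have := kdomNum_one_add_maxDegree_le_card G
    rw [hU, Set.ncard_univ, Nat.card_eq_fintype_card]
    omega
  · obtain ⟨u, hu⟩ := (Set.ne_univ_iff_exists_notMem D).1 hU
    exact hD.kdomNum_one_add_sub_two_le hk hu
end

section
/- Let H be a hypergraph of order n having at least one edge, and let r be the smallest cardinality of an edge of H. Then tc(H) ≤ n − r + 2. -/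
/-!
Pick an edge `e₀` of minimum size `r` and a vertex `v ∈ e₀`. Every vertex outside `e₀`, together
with `v`, forms a transversal: an edge missing it would lie inside `e₀ \ {v}`, which has only
`r - 1` elements. The single edge `e₀` covers the remaining vertices, so the pair has weight
`(n - r + 1) + 1`.
-/

/-- `(T, R)` is a TC-set of the hypergraph with edge family `E`:
`T` is a transversal (meets every edge) and the edges in `R ⊆ E`
together cover every vertex outside `T`. -/
def IsTCSet {V : Type*} [DecidableEq V] (E : Finset (Finset V))
    (T : Finset V) (R : Finset (Finset V)) : Prop :=
  (∀ e ∈ E, (e ∩ T).Nonempty) ∧ R ⊆ E ∧ ∀ v : V, v ∉ T → ∃ e ∈ R, v ∈ e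

/-- The TC-number: the minimum of `|T| + |R|` over all TC-sets `(T, R)`. -/
noncomputable def tcNum {V : Type*} [DecidableEq V] (E : Finset (Finset V)) : ℕ :=
  sInf {n | ∃ T R, IsTCSet E T R ∧ T.card + R.card = n}

open Finset

section

variable {V : Type*} [DecidableEq V]

theorem tcNum_le_of_isTCSet {E : Finset (Finset V)} {T : Finset V} {R : Finset (Finset V)}
    (h : IsTCSet E T R) : tcNum E ≤ T.card + R.card :=
  Nat.sInf_le ⟨T, R, h, rfl⟩

variable [Fintype V]

theorem inter_insert_compl_nonempty {e e₀ : Finset V} {v : V} (hv : v ∈ e₀)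
    (hcard : e₀.card ≤ e.card) : (e ∩ insert v e₀ᶜ).Nonempty := by
  by_contra h
  have hsub : e ⊆ e₀.erase v := by
    intro x hx
    have hx' : x ∉ insert v e₀ᶜ := fun hxT => h ⟨x, mem_inter.mpr ⟨hx, hxT⟩⟩
    simp only [mem_insert, mem_compl, not_or, not_not] at hx'
    exact mem_erase.mpr hx'
  have := card_le_card hsub
  rw [card_erase_of_mem hv] at this
  have : 0 < e₀.card := card_pos.mpr ⟨v, hv⟩
  omega

theorem isTCSet_insert_compl_singleton {E : Finset (Finset V)} {e₀ : Finset V} (he₀ : e₀ ∈ E)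
    (hmin : ∀ e ∈ E, e₀.card ≤ e.card) {v : V} (hv : v ∈ e₀) :
    IsTCSet E (insert v e₀ᶜ) {e₀} :=
  ⟨fun e he => inter_insert_compl_nonempty hv (hmin e he), singleton_subset_iff.mpr he₀,
    fun _ hx => ⟨e₀, mem_singleton_self e₀, by simp_all⟩⟩

theorem card_insert_compl {e₀ : Finset V} {v : V} (hv : v ∈ e₀) :
    (insert v e₀ᶜ).card = Fintype.card V - e₀.card + 1 := by
  rw [card_insert_of_notMem (by simpa using hv), card_compl]

end

theorem statement5_general {V : Type*} [Fintype V] [DecidableEq V] (E : Finset (Finset V))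
    (hcard : ∀ e ∈ E, 2 ≤ e.card)
    (r : ℕ) (hr : ∃ e ∈ E, e.card = r) (hrmin : ∀ e ∈ E, r ≤ e.card) :
    tcNum E ≤ Fintype.card V - r + 2 := by
  obtain ⟨e₀, he₀, rfl⟩ := hr
  obtain ⟨v, hv⟩ : e₀.Nonempty := card_pos.mp (by linarith [hcard e₀ he₀])
  calc tcNum E ≤ (insert v e₀ᶜ).card + ({e₀} : Finset (Finset V)).card :=
        tcNum_le_of_isTCSet (isTCSet_insert_compl_singleton he₀ hrmin hv)
    _ = Fintype.card V - e₀.card + 2 := by rw [card_insert_compl hv, card_singleton]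

/-- If `H` is a hypergraph of order `n` with at least one edge (each edge of
size at least 2) and `r` is the smallest size of an edge, then
`tc(H) ≤ n − r + 2`. -/
theorem statement5 {V : Type*} [Fintype V] [DecidableEq V] (E : Finset (Finset V))
    (hcard : ∀ e ∈ E, 2 ≤ e.card) (hne : E.Nonempty)
    (r : ℕ) (hr : ∃ e ∈ E, e.card = r) (hrmin : ∀ e ∈ E, r ≤ e.card) :
    tcNum E ≤ Fintype.card V - r + 2 :=
  statement5_general E hcard r hr hrmin
end

section
/- Let k ≥ 2 and let H be a k-uniform hypergraph of order n having at least one edge. Then tc(H) ≤ n − k + 2. -/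
section

variable {V : Type*} [DecidableEq V] {E : Finset (Finset V)}

theorem IsTCSet.tcNum_le {T : Finset V} {R : Finset (Finset V)} (h : IsTCSet E T R) :
    tcNum E ≤ T.card + R.card :=
  Nat.sInf_le ⟨T, R, h, rfl⟩

theorem isTCSet_insert_compl [Fintype V] (hE : IsAntichain (· ⊆ ·) (E : Set (Finset V)))
    {e : Finset V} (he : e ∈ E) {v : V} (hv : v ∈ e) :
    IsTCSet E (insert v eᶜ) {e} := by
  refine ⟨fun e' he' => ?_, Finset.singleton_subset_iff.mpr he, fun u hu => ⟨e, by simp, ?_⟩⟩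
  · by_cases hee' : e' = e
    · exact ⟨v, by simp [hee', hv]⟩
    · obtain ⟨x, hx, hxe⟩ := Finset.not_subset.mp (hE he' he hee')
      exact ⟨x, by simp [hx, hxe]⟩
  · simpa using (not_or.mp (Finset.mem_insert.not.mp hu)).2

end

/-- If `H` is a `k`-uniform hypergraph (`k ≥ 2`) of order `n` with at least
one edge, then `tc(H) ≤ n − k + 2`. -/
theorem statement6 {V : Type*} [Fintype V] [DecidableEq V] (E : Finset (Finset V))
    (k : ℕ) (hk : 2 ≤ k) (huni : ∀ e ∈ E, e.card = k) (hne : E.Nonempty) :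
    tcNum E ≤ Fintype.card V - k + 2 := by
  obtain ⟨e, he⟩ := hne
  have hek : e.card = k := huni e he
  obtain ⟨v, hv⟩ : e.Nonempty := Finset.card_pos.mp (by omega)
  have hsized : (E : Set (Finset V)).Sized k := fun e' he' => huni e' he'
  calc tcNum E ≤ (insert v eᶜ).card + ({e} : Finset (Finset V)).card :=
        (isTCSet_insert_compl hsized.isAntichain he hv).tcNum_le
    _ = Fintype.card V - k + 2 := by
        rw [Finset.card_insert_of_notMem (by simpa using hv), Finset.card_compl, hek,
          Finset.card_singleton]
end

section
/- If H is a 2-uniform hypergraph (that is, a finite simple graph regarded as a hypergraph) of order n, then tc(H) = n. -/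
/-!
Taking every vertex as the transversal and no edges gives a TC-set of size `n`. Conversely, in
a TC-set `(T, R)` of a graph each edge of `R` meets `T`, so it covers at most one of its two
vertices outside `T`; hence `|R| ≥ |V \ T|` and `|T| + |R| ≥ n`.
-/

namespace IsTCSet

variable {V : Type*} [DecidableEq V] {E : Finset (Finset V)} {T : Finset V}
  {R : Finset (Finset V)}

theorem univ_empty [Fintype V] (hE : ∀ e ∈ E, e.Nonempty) : IsTCSet E Finset.univ ∅ :=
  ⟨fun e he => by simpa using hE e he, Finset.empty_subset E, fun v hv => absurd (Finset.mem_univ v) hv⟩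

theorem tcNum_le_s7 (h : IsTCSet E T R) : tcNum E ≤ T.card + R.card :=
  Nat.sInf_le ⟨T, R, h, rfl⟩

theorem card_sdiff_le_one_of_mem (h : IsTCSet E T R) {e : Finset V} (he : e ∈ R)
    (hcard : e.card ≤ 2) : (e \ T).card ≤ 1 := by
  have hmeet : 0 < (e ∩ T).card := (h.1 e (h.2.1 he)).card_pos
  have := Finset.card_sdiff_add_card_inter e T
  omega

theorem card_le_card_add_card [Fintype V] (h : IsTCSet E T R) (hE : ∀ e ∈ E, e.card ≤ 2) :
    Fintype.card V ≤ T.card + R.card := by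
  have hcover : Finset.univ \ T ⊆ R.biUnion (· \ T) := by
    intro v hv
    have hvT : v ∉ T := (Finset.mem_sdiff.mp hv).2
    obtain ⟨e, heR, hve⟩ := h.2.2 v hvT
    exact Finset.mem_biUnion.mpr ⟨e, heR, Finset.mem_sdiff.mpr ⟨hve, hvT⟩⟩
  have hR : (Finset.univ \ T).card ≤ R.card :=
    calc (Finset.univ \ T).card ≤ (R.biUnion (· \ T)).card := Finset.card_le_card hcover
      _ ≤ ∑ e ∈ R, (e \ T).card := Finset.card_biUnion_le
      _ ≤ ∑ _e ∈ R, 1 := Finset.sum_le_sum fun e he =>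
          h.card_sdiff_le_one_of_mem he (hE e (h.2.1 he))
      _ = R.card := by rw [Finset.card_eq_sum_ones]
  have := Finset.card_sdiff_add_card_eq_card (Finset.subset_univ T)
  rw [Finset.card_univ] at this
  omega

end IsTCSet

/-- If `H` is a `2`-uniform hypergraph (a simple graph regarded as a
hypergraph) of order `n`, then `tc(H) = n`. -/
theorem statement7 {V : Type*} [Fintype V] [DecidableEq V] (E : Finset (Finset V))
    (huni : ∀ e ∈ E, e.card = 2) :
    tcNum E = Fintype.card V := by
  have hall : IsTCSet E Finset.univ ∅ :=
    IsTCSet.univ_empty fun e he => Finset.card_pos.mp (by rw [huni e he]; norm_num)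
  refine le_antisymm (by simpa using hall.tcNum_le_s7) (le_csInf ⟨_, _, _, hall, rfl⟩ ?_)
  rintro n ⟨T, R, hTR, rfl⟩
  exact hTR.card_le_card_add_card fun e he => (huni e he).le
end

section
/- For all integers n ≥ k ≥ 2, the complete k-uniform hypergraph K_n^k on n vertices satisfies tc(K_n^k) = n − k + 2. -/
/-!
A set `T` meets every `k`-subset of the vertex set exactly when fewer than `k` vertices lie
outside it, so `|T| ≥ n - k + 1`. If `T` is not everything, some vertex outside `T` has to be
covered, which costs at least one edge; if `T` is everything, `|T| = n ≥ n - k + 2` as `k ≥ 2`.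
Conversely the complement of `k - 1` vertices of one edge `e`, together with `R = {e}`,
is a TC-set of size `n - k + 2`.
-/

open Finset

section

variable {V : Type*} [DecidableEq V]

theorem forall_mem_powersetCard_inter_nonempty_iff {s T : Finset V} {k : ℕ} :
    (∀ e ∈ powersetCard k s, (e ∩ T).Nonempty) ↔ (s \ T).card < k := by
  constructor
  · intro hT
    by_contra! hk
    obtain ⟨f, hfs, hfk⟩ := exists_subset_card_eq hk
    obtain ⟨x, hx⟩ := hT f (mem_powersetCard.mpr ⟨hfs.trans sdiff_subset, hfk⟩)
    exact (mem_sdiff.mp (hfs (mem_inter.mp hx).1)).2 (mem_inter.mp hx).2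
  · intro hT e he
    rw [mem_powersetCard] at he
    by_contra! hempty
    have hes : e ⊆ s \ T := fun x hx =>
      mem_sdiff.mpr ⟨he.1 hx, fun hxT => notMem_empty x (hempty ▸ mem_inter.mpr ⟨hx, hxT⟩)⟩
    have := card_le_card hes
    omega

variable [Fintype V]

theorem card_sub_add_two_le_of_isTCSet {k : ℕ} (hk : 2 ≤ k) (hn : k ≤ Fintype.card V)
    {T : Finset V} {R : Finset (Finset V)} (h : IsTCSet (powersetCard k univ) T R) :
    Fintype.card V - k + 2 ≤ T.card + R.card := by
  obtain ⟨htr, -, hcov⟩ := h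
  have hTc : Tᶜ.card < k := by
    rw [compl_eq_univ_sdiff]
    exact forall_mem_powersetCard_inter_nonempty_iff.mp htr
  have hcard := card_compl_add_card T
  rcases Tᶜ.eq_empty_or_nonempty with hempty | ⟨v, hv⟩
  · rw [hempty, card_empty] at hcard
    omega
  · obtain ⟨e, heR, -⟩ := hcov v (mem_compl.mp hv)
    have : 1 ≤ R.card := card_pos.mpr ⟨e, heR⟩
    omega

theorem exists_isTCSet_powersetCard {k : ℕ} (hk : 1 ≤ k) (hn : k ≤ Fintype.card V) :
    ∃ (T : Finset V) (R : Finset (Finset V)),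
      IsTCSet (powersetCard k univ) T R ∧ T.card + R.card = Fintype.card V - k + 2 := by
  obtain ⟨e, -, he⟩ := exists_subset_card_eq (show k ≤ (univ : Finset V).card by simpa using hn)
  obtain ⟨S, hSe, hS⟩ := exists_subset_card_eq (show k - 1 ≤ e.card by omega)
  refine ⟨Sᶜ, {e}, ⟨?_, ?_, ?_⟩, ?_⟩
  · rw [forall_mem_powersetCard_inter_nonempty_iff, ← compl_eq_univ_sdiff, compl_compl]
    omega
  · simpa using he
  · intro v hv
    exact ⟨e, mem_singleton_self e, hSe (by simpa using hv)⟩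
  · rw [card_compl, hS, card_singleton]
    omega

end

/-- For all `n ≥ k ≥ 2`, the complete `k`-uniform hypergraph on an
`n`-element vertex set (whose edges are all `k`-element subsets) satisfies
`tc(K_n^k) = n − k + 2`. -/
theorem statement8 {V : Type*} [Fintype V] [DecidableEq V] (k : ℕ)
    (hk : 2 ≤ k) (hn : k ≤ Fintype.card V) :
    tcNum (Finset.powersetCard k (Finset.univ : Finset V))
      = Fintype.card V - k + 2 := by
  refine IsLeast.csInf_eq ⟨exists_isTCSet_powersetCard (by omega) hn, ?_⟩
  rintro m ⟨T, R, hTR, rfl⟩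
  exact card_sub_add_two_le_of_isTCSet hk hn hTR
end

section
/- Let k ≥ 2 and let H be a k-uniform hypergraph of order n having at least one edge. Then tc(H) = n − k + 2 if and only if for every integer ℓ with 1 ≤ ℓ ≤ k − 1 and for every ℓ distinct edges e_1, …, e_ℓ of H, every weakly independent subset of the union e_1 ∪ ⋯ ∪ e_ℓ has at most ℓ + k − 2 vertices. -/
/-!
Writing `S = Tᶜ`, a TC-set `(T, R)` is the same as a family `R ⊆ E` together with a weakly
independent set `S ⊆ ⋃ R`, of weight `n - |S| + |R|`. One edge `e` and `S = e` minus a vertex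
give `tc(H) ≤ n - k + 2`. Conversely, if some pair has `|S| ≥ |R| + k - 1`, then while
`|R| ≥ k` some edge of `R` owns at most `|S| / |R|` vertices of `S` that no other edge of `R`
covers; removing it keeps the inequality, so it eventually holds with `|R| ≤ k - 1`.
-/

open Finset

section

variable {V : Type*} [DecidableEq V]

theorem exists_mul_card_sdiff_biUnion_erase_le {R : Finset (Finset V)} {S : Finset V}
    (hS : S ⊆ R.biUnion id) (hR : R.Nonempty) :
    ∃ e ∈ R, #R * #(S \ (R.erase e).biUnion id) ≤ #S := by
  set A : Finset V → Finset V := fun e => S \ (R.erase e).biUnion id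
  have hdisj : (R : Set (Finset V)).PairwiseDisjoint A := by
    intro e he f hf hef
    refine disjoint_left.mpr fun v hve hvf => ?_
    obtain ⟨g, hg, hvg⟩ := mem_biUnion.mp (hS (mem_sdiff.mp hve).1)
    obtain rfl | hge := eq_or_ne g e
    · exact (mem_sdiff.mp hvf).2 (mem_biUnion.mpr ⟨g, mem_erase.mpr ⟨hef, hg⟩, hvg⟩)
    · exact (mem_sdiff.mp hve).2 (mem_biUnion.mpr ⟨g, mem_erase.mpr ⟨hge, hg⟩, hvg⟩)
  have hsum : ∑ e ∈ R, #(A e) ≤ #S := by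
    rw [← card_biUnion hdisj]
    exact card_le_card (biUnion_subset.mpr fun e _ => sdiff_subset)
  obtain ⟨e, he, hmin⟩ := R.exists_min_image (fun e => #(A e)) hR
  exact ⟨e, he, (R.card_nsmul_le_sum _ _ hmin).trans hsum⟩

theorem exists_small_subfamily_of_card_add_le {k : ℕ} (hk : 2 ≤ k) (R : Finset (Finset V))
    (S : Finset V) (hS : S ⊆ R.biUnion id) (hcard : #R + k ≤ #S + 1) :
    ∃ R' ⊆ R, R'.Nonempty ∧ #R' < k ∧ #R' + k ≤ #(S ∩ R'.biUnion id) + 1 := by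
  induction R using Finset.strongInduction generalizing S with
  | H R ih =>
  have hR : R.Nonempty := by
    obtain ⟨v, hv⟩ : S.Nonempty := card_pos.mp (by omega)
    obtain ⟨e, he, -⟩ := mem_biUnion.mp (hS hv)
    exact ⟨e, he⟩
  by_cases hsmall : #R < k
  · exact ⟨R, subset_rfl, hR, hsmall, by rwa [inter_eq_left.mpr hS]⟩
  obtain ⟨e, he, hprivate⟩ := exists_mul_card_sdiff_biUnion_erase_le hS hR
  set S' := S ∩ (R.erase e).biUnion id
  have hsplit : #(S \ (R.erase e).biUnion id) + #S' = #S := card_sdiff_add_card_inter _ _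
  have herase : #(R.erase e) + 1 = #R := card_erase_add_one he
  have hcard' : #(R.erase e) + k ≤ #S' + 1 := by nlinarith
  obtain ⟨R', hR', hR'ne, hR'k, hR'S⟩ :=
    ih _ (erase_ssubset he) S' inter_subset_right hcard'
  refine ⟨R', hR'.trans (erase_subset e R), hR'ne, hR'k, hR'S.trans ?_⟩
  gcongr
  exact inter_subset_left

variable [Fintype V] (E : Finset (Finset V))

theorem isTCSet_compl_iff (S : Finset V) (R : Finset (Finset V)) :
    IsTCSet E Sᶜ R ↔ (∀ e ∈ E, ¬ e ⊆ S) ∧ R ⊆ E ∧ S ⊆ R.biUnion id := by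
  simp only [IsTCSet, Finset.Nonempty, mem_inter, mem_compl, not_not, subset_iff,
    mem_biUnion, id, not_forall, exists_prop]

theorem tcNum_add_card_le {R : Finset (Finset V)} {S : Finset V} (hRE : R ⊆ E)
    (hS : S ⊆ R.biUnion id) (hindep : ∀ e ∈ E, ¬ e ⊆ S) :
    tcNum E + #S ≤ Fintype.card V + #R := by
  have hTC : IsTCSet E Sᶜ R := (isTCSet_compl_iff E S R).mpr ⟨hindep, hRE, hS⟩
  have hle : tcNum E ≤ #Sᶜ + #R := Nat.sInf_le ⟨Sᶜ, R, hTC, rfl⟩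
  rw [card_compl] at hle
  have := S.card_le_univ
  omega

theorem isTCSet_univ_empty (hE : ∀ e ∈ E, e.Nonempty) : IsTCSet E univ ∅ :=
  ⟨fun e he => by simpa using hE e he, empty_subset E, fun v hv => (hv (mem_univ v)).elim⟩

theorem exists_add_card_eq_tcNum (hE : ∀ e ∈ E, e.Nonempty) :
    ∃ R ⊆ E, ∃ S ⊆ R.biUnion id, (∀ e ∈ E, ¬ e ⊆ S) ∧
      tcNum E + #S = Fintype.card V + #R := by
  obtain ⟨T, R, hTC, hw⟩ := Nat.sInf_mem (s := {n | ∃ T R, IsTCSet E T R ∧ #T + #R = n})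
    ⟨_, _, _, isTCSet_univ_empty E hE, rfl⟩
  rw [← compl_compl T, isTCSet_compl_iff] at hTC
  obtain ⟨hindep, hRE, hS⟩ := hTC
  refine ⟨R, hRE, Tᶜ, hS, hindep, ?_⟩
  rw [tcNum, ← hw, card_compl]
  have := T.card_le_univ
  omega

theorem tcNum_add_le_of_uniform {k : ℕ} (hk : 1 ≤ k) (huni : ∀ e ∈ E, #e = k)
    {e : Finset V} (he : e ∈ E) : tcNum E + k ≤ Fintype.card V + 2 := by
  obtain ⟨x, hx⟩ : e.Nonempty := card_pos.mp (by rw [huni e he]; omega)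
  have hindep : ∀ f ∈ E, ¬ f ⊆ e.erase x := fun f hf hfe => by
    have := card_le_card hfe
    rw [card_erase_of_mem hx, huni f hf, huni e he] at this
    omega
  have := tcNum_add_card_le E (singleton_subset_iff.mpr he) (by simpa using erase_subset x e)
    hindep
  rw [card_erase_of_mem hx, huni e he, card_singleton] at this
  omega

end

/-- A `k`-uniform hypergraph (`k ≥ 2`) of order `n` with at least one edge
satisfies `tc(H) = n − k + 2` iff for every `ℓ` with `1 ≤ ℓ ≤ k − 1` and
every `ℓ` distinct edges, every weakly independent subset of their union
(`S` containing no edge of `H`) has at most `ℓ + k − 2` vertices. -/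
theorem statement9 {V : Type*} [Fintype V] [DecidableEq V] (E : Finset (Finset V))
    (k : ℕ) (hk : 2 ≤ k) (huni : ∀ e ∈ E, e.card = k) (hne : E.Nonempty) :
    tcNum E = Fintype.card V - k + 2 ↔
      ∀ ℓ : ℕ, 1 ≤ ℓ → ℓ ≤ k - 1 → ∀ R ⊆ E, R.card = ℓ →
        ∀ S : Finset V, S ⊆ R.biUnion id → (∀ e ∈ E, ¬ e ⊆ S) →
          S.card ≤ ℓ + k - 2 := by
  obtain ⟨e₀, he₀⟩ := hne
  have hupper := tcNum_add_le_of_uniform E (by omega) huni he₀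
  have hkn : k ≤ Fintype.card V := huni e₀ he₀ ▸ e₀.card_le_univ
  constructor
  · rintro htc ℓ - - R hRE rfl S hS hindep
    have := tcNum_add_card_le E hRE hS hindep
    omega
  · intro hcond
    obtain ⟨R, hRE, S, hS, hindep, hopt⟩ := exists_add_card_eq_tcNum E
      fun e he => card_pos.mp (by rw [huni e he]; omega)
    by_contra hlt
    obtain ⟨R', hR'R, hR'ne, hR'k, hR'S⟩ :=
      exists_small_subfamily_of_card_add_le hk R S hS (by omega)
    have := hcond #R' (card_pos.mpr hR'ne) (by omega) R' (hR'R.trans hRE) rfl _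
      inter_subset_right fun e he hsub => hindep e he (hsub.trans inter_subset_left)
    omega
end

section
/- Let k ≥ 3 and let F be a connected k-uniform hypergraph with at least one edge, and let G be the double incidence graph of F. Then γ_k(G) = |V(F)|; moreover, V(F) is a minimum k-dominating set of G. -/
/-- Two vertices of a hypergraph are adjacent when some edge contains both. -/
def HyperAdj {V : Type*} (E : Finset (Finset V)) (u v : V) : Prop :=
  ∃ e ∈ E, u ∈ e ∧ v ∈ e

/-- A hypergraph is connected if any two vertices are joined by a sequence of
consecutively adjacent vertices. -/
def HyperConnected {V : Type*} (E : Finset (Finset V)) : Prop :=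
  ∀ u v : V, Relation.ReflTransGen (HyperAdj E) u v

/-- The double incidence graph of a hypergraph with vertex type `V` and edge
family `E`: a bipartite graph on `V ⊕ (E × Bool)` in which `(e, j)` is
adjacent to `v : V` iff `v ∈ e`, and there are no other edges. -/
def doubleIncidence {V : Type*} (E : Finset (Finset V)) :
    SimpleGraph (V ⊕ ({e // e ∈ E} × Bool)) :=
  SimpleGraph.fromRel fun a b =>
    ∃ (v : V) (e : {e // e ∈ E}) (j : Bool),
      a = Sum.inl v ∧ b = Sum.inr (e, j) ∧ v ∈ e.1

open Finset Sum

section DoubleIncidence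

variable {V : Type*} (E : Finset (Finset V))

lemma doubleIncidence_adj_inl_inr (v : V) (p : {e // e ∈ E} × Bool) :
    (doubleIncidence E).Adj (inl v) (inr p) ↔ v ∈ p.1.1 := by
  simp only [doubleIncidence, SimpleGraph.fromRel_adj]
  aesop

lemma doubleIncidence_not_adj_inl_inl (u v : V) :
    ¬ (doubleIncidence E).Adj (inl u) (inl v) := by
  simp [doubleIncidence]

lemma ncard_neighborSet_inr_inter_range_inl (p : {e // e ∈ E} × Bool) :
    ((doubleIncidence E).neighborSet (inr p) ∩ Set.range inl).ncard = #p.1.1 := by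
  have : (doubleIncidence E).neighborSet (inr p) ∩ Set.range inl = inl '' (p.1.1 : Set V) := by
    ext (w | q)
    · simp [(doubleIncidence E).adj_comm, doubleIncidence_adj_inl_inr]
    · simp
  rw [this, Set.ncard_image_of_injective _ inl_injective, Set.ncard_coe_finset]

lemma ncard_neighborSet_inl_inter [DecidableEq V] (s : Finset (V ⊕ ({e // e ∈ E} × Bool)))
    (v : V) :
    ((doubleIncidence E).neighborSet (inl v) ∩ s).ncard = #{p ∈ s.toRight | v ∈ p.1.1} := by
  have : (doubleIncidence E).neighborSet (inl v) ∩ s =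
      inr '' ({p ∈ s.toRight | v ∈ p.1.1} : Finset _) := by
    ext (w | q)
    · simp [doubleIncidence_not_adj_inl_inl]
    · simp [doubleIncidence_adj_inl_inr, and_comm]
  rw [this, Set.ncard_image_of_injective _ inr_injective, Set.ncard_coe_finset]

theorem isKDomSet_range_inl {k : ℕ} (hE : ∀ e ∈ E, k ≤ #e) :
    IsKDomSet (doubleIncidence E) k (Set.range inl) := by
  rintro (v | p) hx
  · exact absurd ⟨v, rfl⟩ hx
  · rw [ncard_neighborSet_inr_inter_range_inl]
    exact hE p.1.1 p.1.2

/-- Each vertex outside `s` lies in at least `k` edge copies in `s`, while each edge copy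
contains at most `k` vertices, so double counting the incidences leaves at least as many
edge copies as missing vertices in `s`. -/
theorem card_le_card_of_isKDomSet [Fintype V] {k : ℕ} (hk : 0 < k) (hE : ∀ e ∈ E, #e ≤ k)
    (s : Finset (V ⊕ ({e // e ∈ E} × Bool)))
    (hs : IsKDomSet (doubleIncidence E) k s) : Fintype.card V ≤ #s := by
  classical
  have hcover : ∀ v ∈ s.toLeftᶜ, k ≤ #(s.toRight.bipartiteAbove (fun v p => v ∈ p.1.1) v) := by
    intro v hv
    have hvs : inl v ∉ s := by simpa using hv
    simpa [bipartiteAbove, ncard_neighborSet_inl_inter E s v] using hs (inl v) hvs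
  have hsize : ∀ p ∈ s.toRight, #(s.toLeftᶜ.bipartiteBelow (fun v p => v ∈ p.1.1) p) ≤ k :=
    fun p _ => (card_le_card fun _ hv => (mem_filter.1 hv).2).trans (hE p.1.1 p.1.2)
  have hmissing : #s.toLeftᶜ ≤ #s.toRight :=
    Nat.le_of_mul_le_mul_right (card_mul_le_card_mul _ hcover hsize) hk
  calc Fintype.card V = #s.toLeft + #s.toLeftᶜ := (card_add_card_compl _).symm
    _ ≤ #s.toLeft + #s.toRight := Nat.add_le_add_left hmissing _
    _ = #s := card_toLeft_add_card_toRight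

end DoubleIncidence

theorem kdomNum_eq_ncard {W : Type*} {G : SimpleGraph W} {k : ℕ} {D : Set W}
    (hD : IsKDomSet G k D) (hmin : ∀ D', IsKDomSet G k D' → D.ncard ≤ D'.ncard) :
    kdomNum G k = D.ncard :=
  le_antisymm (Nat.sInf_le ⟨D, hD, rfl⟩)
    (le_csInf ⟨_, D, hD, rfl⟩ fun _ ⟨D', hD', hn⟩ => hn ▸ hmin D' hD')

theorem statement11_general {V : Type*} [Fintype V] (E : Finset (Finset V))
    (k : ℕ) (hk : 3 ≤ k) (huni : ∀ e ∈ E, e.card = k) :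
    kdomNum (doubleIncidence E) k = Fintype.card V ∧
    IsKDomSet (doubleIncidence E) k (Set.range Sum.inl) ∧
    (Set.range (Sum.inl : V → V ⊕ ({e // e ∈ E} × Bool))).ncard
      = kdomNum (doubleIncidence E) k := by
  have hdom := isKDomSet_range_inl E fun e he => (huni e he).ge
  have hcard : (Set.range (inl : V → V ⊕ ({e // e ∈ E} × Bool))).ncard = Fintype.card V := by
    rw [Set.ncard_range_of_injective inl_injective, Nat.card_eq_fintype_card]
  have hmin : ∀ D, IsKDomSet (doubleIncidence E) k D → Fintype.card V ≤ D.ncard := by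
    intro D hD
    rw [← D.toFinite.coe_toFinset] at hD ⊢
    rw [Set.ncard_coe_finset]
    exact card_le_card_of_isKDomSet E (by omega) (fun e he => (huni e he).le) _ hD
  have hγ := kdomNum_eq_ncard hdom (hcard ▸ hmin)
  exact ⟨hγ.trans hcard, hdom, hγ.symm⟩

/-- Let `k ≥ 3` and let `F` be a connected `k`-uniform hypergraph with at
least one edge, and let `G` be its double incidence graph. Then
`γ_k(G) = |V(F)|`, and `V(F)` is a minimum `k`-dominating set of `G`. -/
theorem statement11 {V : Type*} [Fintype V] [DecidableEq V] (E : Finset (Finset V))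
    (k : ℕ) (hk : 3 ≤ k) (huni : ∀ e ∈ E, e.card = k) (hne : E.Nonempty)
    (hconn : HyperConnected E) :
    kdomNum (doubleIncidence E) k = Fintype.card V ∧
    IsKDomSet (doubleIncidence E) k (Set.range Sum.inl) ∧
    (Set.range (Sum.inl : V → V ⊕ ({e // e ∈ E} × Bool))).ncard
      = kdomNum (doubleIncidence E) k :=
  statement11_general E k hk huni
end

section
/- For all integers k ≥ 2, r ≥ 1 and i_1, …, i_r with each i_j ≥ k, the graph G = S_k(i_1, …, i_r) is (γ, γ_k)-perfect: G has minimum degree at least k, and every nonempty connected induced subgraph H of G with minimum degree δ(H) ≥ k satisfies γ_k(H) = γ(H) + k − 2. -/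
/-- The graph `S_k(i_1, …, i_r)`: its vertices are `k − 1` "center" vertices
`c_1, …, c_{k−1}`, the vertices `v_1, …, v_r`, and vertices `x_{j,m}` for
`1 ≤ j ≤ r`, `1 ≤ m ≤ i_j`; each `x_{j,m}` is adjacent exactly to `v_j` and
to all the centers, and there are no other edges. -/
def SGraph (k r : ℕ) (i : Fin r → ℕ) :
    SimpleGraph (Fin (k - 1) ⊕ (Fin r ⊕ (Σ j : Fin r, Fin (i j)))) :=
  SimpleGraph.fromRel fun a b =>
    ∃ (j : Fin r) (m : Fin (i j)),
      b = Sum.inr (Sum.inr ⟨j, m⟩) ∧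
      (a = Sum.inr (Sum.inl j) ∨ ∃ c : Fin (k - 1), a = Sum.inl c)

/-!
Let `H = G[W]` have minimum degree at least `k`. A leaf `x_{j,m}` has degree exactly `k` in `G`,
so all its neighbours lie in `W`; hence `W` contains every centre, and, writing `J` for the set of
hubs `v_j` in `W`, every leaf of `H` hangs off a hub in `J`, each of which keeps at least `k` leaves.
The hubs of `J` together with one leaf dominate `H`, and the hubs of `J` together with the `k - 1`
centres `k`-dominate it. For the matching lower bounds, a dominating set `D` is counted inside the
disjoint stars `{v_j} ∪ {x_{j,m}}`, `j ∈ J`, each of which it meets: a centre outside a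
dominating set forces a second vertex of `D` into some star, and a centre outside a `k`-dominating
set forces every leaf of `H` into `D`, hence at least `k` vertices of `D` into every star.
So `γ(H) = |J| + 1` and `γ_k(H) = k - 1 + |J|`.
-/

open Set

theorem Set.ncard_eq_sum_ncard_inter_preimage {α ι : Type*} [Finite α] [Fintype ι]
    (f : α → ι) (s : Set α) : s.ncard = ∑ y, (s ∩ f ⁻¹' {y}).ncard := by
  rw [← finsum_eq_sum_of_fintype, ← ncard_iUnion_of_finite (fun _ => toFinite _)]
  · rw [← inter_iUnion, ← preimage_iUnion, iUnion_of_singleton, preimage_univ, inter_univ]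
  · exact fun a b hab => Disjoint.mono inter_subset_right inter_subset_right
      ((disjoint_singleton.2 hab).preimage f)

namespace SimpleGraph

variable {V : Type*} (G : SimpleGraph V)

def IsKDomSetOn (k : ℕ) (W D : Set V) : Prop :=
  ∀ v ∈ W, v ∉ D → k ≤ (G.neighborSet v ∩ D).ncard

lemma ncard_neighborSet_induce (W : Set V) (v : W) :
    ((G.induce W).neighborSet v).ncard = (G.neighborSet v ∩ W).ncard := by
  rw [neighborSet_induce, ← ncard_image_of_injective _ Subtype.val_injective,
    image_preimage_eq_inter_range, Subtype.range_coe]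

lemma ncard_neighborSet_inter_induce (W : Set V) (v : W) (D : Set W) :
    ((G.induce W).neighborSet v ∩ D).ncard = (G.neighborSet v ∩ Subtype.val '' D).ncard := by
  rw [neighborSet_induce, ← ncard_image_of_injective _ Subtype.val_injective,
    image_inter Subtype.val_injective, image_preimage_eq_inter_range, Subtype.range_coe,
    inter_assoc, inter_eq_right.mpr (Subtype.coe_image_subset W D)]

lemma isKDomSet_induce_iff {W : Set V} {k : ℕ} {D : Set W} :
    IsKDomSet (G.induce W) k D ↔ G.IsKDomSetOn k W (Subtype.val '' D) := by
  simp only [IsKDomSet, IsKDomSetOn, ncard_neighborSet_inter_induce, Subtype.forall]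
  exact forall₂_congr fun v hv => by rw [← Subtype.val_injective.mem_set_image (a := ⟨v, hv⟩)]

lemma kdomNum_induce_eq {W : Set V} {k n : ℕ}
    (hex : ∃ D ⊆ W, G.IsKDomSetOn k W D ∧ D.ncard = n)
    (hmin : ∀ D ⊆ W, G.IsKDomSetOn k W D → n ≤ D.ncard) :
    kdomNum (G.induce W) k = n := by
  obtain ⟨D, hDW, hD, rfl⟩ := hex
  have hD' : IsKDomSet (G.induce W) k (Subtype.val ⁻¹' D) := by
    rwa [isKDomSet_induce_iff, image_preimage_eq_inter_range, Subtype.range_coe,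
      inter_eq_left.mpr hDW]
  refine le_antisymm (Nat.sInf_le ⟨_, hD', ?_⟩) (le_csInf ⟨_, _, hD', rfl⟩ ?_)
  · rw [← ncard_image_of_injective _ Subtype.val_injective, image_preimage_eq_inter_range,
      Subtype.range_coe, inter_eq_left.mpr hDW]
  · rintro _ ⟨E, hE, rfl⟩
    rw [← ncard_image_of_injective _ Subtype.val_injective]
    exact hmin _ (Subtype.coe_image_subset W E) ((G.isKDomSet_induce_iff).mp hE)

end SimpleGraph

namespace SGraph

variable {k r : ℕ} {i : Fin r → ℕ}

abbrev Vertex (k r : ℕ) (i : Fin r → ℕ) := Fin (k - 1) ⊕ (Fin r ⊕ (Σ j : Fin r, Fin (i j)))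

abbrev center (c : Fin (k - 1)) : Vertex k r i := Sum.inl c
abbrev hub (j : Fin r) : Vertex k r i := Sum.inr (Sum.inl j)
abbrev leaf (j : Fin r) (m : Fin (i j)) : Vertex k r i := Sum.inr (Sum.inr ⟨j, m⟩)

lemma neighborSet_center (c : Fin (k - 1)) :
    (SGraph k r i).neighborSet (center c) = {v | ∃ j m, v = leaf j m} := by
  ext (c' | j | ⟨j, m⟩) <;> aesop (add simp SGraph)

lemma neighborSet_hub (j : Fin r) :
    (SGraph k r i).neighborSet (hub j) = range (leaf j) := by
  ext (c' | j' | ⟨j', m⟩) <;> aesop (add simp SGraph)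

lemma neighborSet_leaf (j : Fin r) (m : Fin (i j)) :
    (SGraph k r i).neighborSet (leaf j m) = insert (hub j) (range center) := by
  ext (c' | j' | ⟨j', m'⟩) <;> aesop (add simp SGraph)

lemma ncard_neighborSet_leaf (hk : 1 ≤ k) (j : Fin r) (m : Fin (i j)) :
    ((SGraph k r i).neighborSet (leaf j m)).ncard = k := by
  rw [neighborSet_leaf, ncard_insert_of_notMem (by simp),
    ncard_range_of_injective Sum.inl_injective, Nat.card_eq_fintype_card, Fintype.card_fin]
  omega

lemma leaf_injective (j : Fin r) : Function.Injective (leaf (k := k) (i := i) j) := by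
  intro m m' h
  simpa using h

lemma ncard_neighborSet_hub (j : Fin r) :
    ((SGraph k r i).neighborSet (hub j)).ncard = i j := by
  rw [neighborSet_hub, ncard_range_of_injective (leaf_injective j), Nat.card_eq_fintype_card,
    Fintype.card_fin]

lemma le_ncard_neighborSet (hk : 1 ≤ k) (hr : 1 ≤ r) (hi : ∀ j, k ≤ i j) (v : Vertex k r i) :
    k ≤ ((SGraph k r i).neighborSet v).ncard := by
  obtain c | j | ⟨j, m⟩ := v
  · calc k ≤ ((SGraph k r i).neighborSet (hub ⟨0, hr⟩)).ncard :=
          (ncard_neighborSet_hub _).symm ▸ hi _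
      _ ≤ ((SGraph k r i).neighborSet (center c)).ncard := by
          rw [neighborSet_hub, neighborSet_center]
          exact ncard_le_ncard (by rintro _ ⟨m, rfl⟩; exact ⟨_, m, rfl⟩)
  · exact (ncard_neighborSet_hub j).symm ▸ hi j
  · exact (ncard_neighborSet_leaf hk j m).ge

def branch : Vertex k r i → Option (Fin r)
  | .inl _ => none
  | .inr (.inl j) => some j
  | .inr (.inr p) => some p.1

def star (j : Fin r) : Set (Vertex k r i) := branch ⁻¹' {some j}

lemma hub_mem_star (j : Fin r) : hub j ∈ star (k := k) (i := i) j := rfl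

lemma leaf_mem_star (j : Fin r) (m : Fin (i j)) : leaf (k := k) j m ∈ star j := rfl

lemma neighborSet_hub_subset_star (j : Fin r) :
    (SGraph k r i).neighborSet (hub j) ⊆ star j := by
  rw [neighborSet_hub]
  rintro _ ⟨m, rfl⟩
  exact leaf_mem_star j m

lemma range_center_eq_branch_preimage : range (center (r := r) (i := i) (k := k)) = branch ⁻¹' {none} := by
  ext (c | j | ⟨j, m⟩) <;> simp [branch]

lemma ncard_inter_range_center_add_sum_le (D : Set (Vertex k r i)) (J : Finset (Fin r)) :
    (D ∩ range center).ncard + ∑ j ∈ J, (D ∩ star j).ncard ≤ D.ncard := by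
  rw [ncard_eq_sum_ncard_inter_preimage branch D, Fintype.sum_option, range_center_eq_branch_preimage]
  gcongr
  exact Finset.sum_le_sum_of_subset J.subset_univ

section Induced

variable {W : Set (Vertex k r i)}

lemma neighborSet_leaf_subset (hk : 1 ≤ k)
    (hW : ∀ v ∈ W, k ≤ ((SGraph k r i).neighborSet v ∩ W).ncard)
    {j : Fin r} {m : Fin (i j)} (h : leaf j m ∈ W) :
    (SGraph k r i).neighborSet (leaf j m) ⊆ W := by
  have hk' := (ncard_neighborSet_leaf hk j m).trans_le (hW _ h)
  rw [← eq_of_subset_of_ncard_le inter_subset_left hk']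
  exact inter_subset_right

lemma hub_mem_of_leaf_mem (hk : 1 ≤ k)
    (hW : ∀ v ∈ W, k ≤ ((SGraph k r i).neighborSet v ∩ W).ncard)
    {j : Fin r} {m : Fin (i j)} (h : leaf j m ∈ W) : hub j ∈ W :=
  neighborSet_leaf_subset hk hW h (by simp [neighborSet_leaf])

lemma exists_leaf_mem (hk : 1 ≤ k)
    (hW : ∀ v ∈ W, k ≤ ((SGraph k r i).neighborSet v ∩ W).ncard) (hne : W.Nonempty) :
    ∃ j m, leaf j m ∈ W := by
  obtain ⟨v, hv⟩ := hne
  obtain ⟨w, hw, hwW⟩ : ((SGraph k r i).neighborSet v ∩ W).Nonempty :=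
    nonempty_of_ncard_ne_zero (by have := hW v hv; omega)
  obtain c | j | ⟨j, m⟩ := v
  · rw [neighborSet_center] at hw
    obtain ⟨j, m, rfl⟩ := hw
    exact ⟨j, m, hwW⟩
  · rw [neighborSet_hub] at hw
    obtain ⟨m, rfl⟩ := hw
    exact ⟨j, m, hwW⟩
  · exact ⟨j, m, hv⟩

lemma center_mem (hk : 1 ≤ k)
    (hW : ∀ v ∈ W, k ≤ ((SGraph k r i).neighborSet v ∩ W).ncard) (hne : W.Nonempty)
    (c : Fin (k - 1)) : center c ∈ W := by
  obtain ⟨j, m, h⟩ := exists_leaf_mem hk hW hne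
  exact neighborSet_leaf_subset hk hW h (by simp [neighborSet_leaf])

lemma hub_injective : Function.Injective (hub (k := k) (i := i)) := by
  intro j j' h
  simpa using h

open Classical in
noncomputable def hubIndices (W : Set (Vertex k r i)) : Finset (Fin r) := {j | hub j ∈ W}

lemma mem_hubIndices {j : Fin r} : j ∈ hubIndices W ↔ hub j ∈ W := by
  simp [hubIndices]

lemma ncard_inter_range_hub : (W ∩ range hub).ncard = (hubIndices W).card := by
  rw [← ncard_coe_finset, ← ncard_image_of_injective _ hub_injective]
  congr 1
  ext v
  simp only [mem_inter_iff, mem_range, mem_image, Finset.mem_coe, mem_hubIndices]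
  constructor
  · rintro ⟨hv, j, rfl⟩
    exact ⟨j, hv, rfl⟩
  · rintro ⟨j, hj, rfl⟩
    exact ⟨hj, j, rfl⟩

lemma isKDomSetOn_one_insert_leaf (hk : 1 ≤ k)
    (hW : ∀ v ∈ W, k ≤ ((SGraph k r i).neighborSet v ∩ W).ncard)
    (j : Fin r) (m : Fin (i j)) :
    (SGraph k r i).IsKDomSetOn 1 W (insert (leaf j m) (W ∩ range hub)) := by
  intro v hv hvD
  refine (ncard_pos (toFinite _)).2 ?_
  obtain c | j' | ⟨j', m'⟩ := v
  · exact ⟨leaf j m, by simp [neighborSet_center], mem_insert _ _⟩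
  · exact (hvD (mem_insert_of_mem _ ⟨hv, j', rfl⟩)).elim
  · exact ⟨hub j', by simp [neighborSet_leaf],
      mem_insert_of_mem _ ⟨hub_mem_of_leaf_mem hk hW hv, j', rfl⟩⟩

lemma isKDomSetOn_range_center_union (hk : 1 ≤ k)
    (hW : ∀ v ∈ W, k ≤ ((SGraph k r i).neighborSet v ∩ W).ncard) :
    (SGraph k r i).IsKDomSetOn k W (range center ∪ (W ∩ range hub)) := by
  intro v hv hvD
  obtain c | j | ⟨j, m⟩ := v
  · exact absurd (Or.inl ⟨c, rfl⟩) hvD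
  · exact absurd (Or.inr ⟨hv, j, rfl⟩) hvD
  · have hN : (SGraph k r i).neighborSet (leaf j m) ⊆ range center ∪ (W ∩ range hub) := by
      rw [neighborSet_leaf]
      rintro _ (rfl | ⟨c, rfl⟩)
      · exact Or.inr ⟨hub_mem_of_leaf_mem hk hW hv, j, rfl⟩
      · exact Or.inl ⟨c, rfl⟩
    rw [inter_eq_left.mpr hN, ncard_neighborSet_leaf hk]

lemma one_le_ncard_inter_star {n : ℕ} (hn : 1 ≤ n) {D : Set (Vertex k r i)}
    (hD : (SGraph k r i).IsKDomSetOn n W D) {j : Fin r} (hj : hub j ∈ W) :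
    1 ≤ (D ∩ star j).ncard := by
  by_cases h : hub j ∈ D
  · exact (ncard_pos (toFinite _)).2 ⟨hub j, h, hub_mem_star j⟩
  · calc 1 ≤ n := hn
      _ ≤ ((SGraph k r i).neighborSet (hub j) ∩ D).ncard := hD _ hj h
      _ ≤ (D ∩ star j).ncard := by
        rw [inter_comm]
        exact ncard_le_ncard (inter_subset_inter_right _ (neighborSet_hub_subset_star j))

lemma exists_two_le_ncard_inter_star (hk : 2 ≤ k)
    (hW : ∀ v ∈ W, k ≤ ((SGraph k r i).neighborSet v ∩ W).ncard) (hne : W.Nonempty)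
    {D : Set (Vertex k r i)} (hDW : D ⊆ W) (hD : (SGraph k r i).IsKDomSetOn 1 W D)
    (hc : D ∩ range center = ∅) :
    ∃ j ∈ hubIndices W, 2 ≤ (D ∩ star j).ncard := by
  have hcD : ∀ c, center c ∉ D := fun c hcD => (eq_empty_iff_forall_notMem.1 hc) _ ⟨hcD, c, rfl⟩
  let c₀ : Fin (k - 1) := ⟨0, by omega⟩
  obtain ⟨_, hw, hwD⟩ : ((SGraph k r i).neighborSet (center c₀) ∩ D).Nonempty :=
    (ncard_pos (toFinite _)).1 (hD _ (center_mem (by omega) hW hne c₀) (hcD c₀))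
  rw [neighborSet_center] at hw
  obtain ⟨j, m, rfl⟩ := hw
  have hj : hub j ∈ W := hub_mem_of_leaf_mem (by omega) hW (hDW hwD)
  refine ⟨j, mem_hubIndices.2 hj, ?_⟩
  -- `v_j` keeps a second leaf `x_{j,m'}` in `W`; it is in `D` or dominated by `v_j ∈ D`.
  obtain ⟨_, ⟨hb, hbW⟩, hbm⟩ :=
    exists_ne_of_one_lt_ncard ((by omega : 1 < k).trans_le (hW _ hj)) (leaf j m)
  rw [neighborSet_hub] at hb
  obtain ⟨m', rfl⟩ := hb
  obtain ⟨x, hxD, hxs, hx⟩ : ∃ x ∈ D, x ∈ star j ∧ x ≠ leaf j m := by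
    by_cases hm' : leaf j m' ∈ D
    · exact ⟨_, hm', leaf_mem_star j m', hbm⟩
    · obtain ⟨y, hy, hyD⟩ : ((SGraph k r i).neighborSet (leaf j m') ∩ D).Nonempty :=
        (ncard_pos (toFinite _)).1 (hD _ hbW hm')
      rw [neighborSet_leaf] at hy
      obtain rfl | ⟨c, rfl⟩ := hy
      · exact ⟨hub j, hyD, hub_mem_star j, by simp⟩
      · exact (hcD c hyD).elim
  exact (one_lt_ncard_iff (toFinite _)).2 ⟨x, leaf j m, ⟨hxD, hxs⟩, ⟨hwD, leaf_mem_star j m⟩, hx⟩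

lemma card_hubIndices_add_one_le (hk : 2 ≤ k)
    (hW : ∀ v ∈ W, k ≤ ((SGraph k r i).neighborSet v ∩ W).ncard) (hne : W.Nonempty)
    {D : Set (Vertex k r i)} (hDW : D ⊆ W) (hD : (SGraph k r i).IsKDomSetOn 1 W D) :
    (hubIndices W).card + 1 ≤ D.ncard := by
  have hstar : ∀ j ∈ hubIndices W, 1 ≤ (D ∩ star j).ncard :=
    fun j hj => one_le_ncard_inter_star le_rfl hD (mem_hubIndices.1 hj)
  refine le_trans ?_ (ncard_inter_range_center_add_sum_le D (hubIndices W))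
  rcases (D ∩ range center).eq_empty_or_nonempty with hc | hc
  · obtain ⟨j, hj, h2⟩ := exists_two_le_ncard_inter_star hk hW hne hDW hD hc
    have hsum := Finset.card_nsmul_le_sum ((hubIndices W).erase j) _ 1
      fun x hx => hstar x (Finset.mem_of_mem_erase hx)
    rw [Finset.card_erase_of_mem hj, smul_eq_mul, mul_one] at hsum
    rw [← Finset.add_sum_erase _ _ hj]
    have := Finset.card_pos.2 ⟨j, hj⟩
    omega
  · have hsum := Finset.card_nsmul_le_sum _ _ 1 hstar
    rw [smul_eq_mul, mul_one] at hsum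
    have := (ncard_pos (toFinite _)).2 hc
    omega

lemma leaf_mem_of_center_notMem (hk : 1 ≤ k) {D : Set (Vertex k r i)}
    (hD : (SGraph k r i).IsKDomSetOn k W D) {c : Fin (k - 1)} (hc : center c ∉ D)
    {j : Fin r} {m : Fin (i j)} (h : leaf j m ∈ W) : leaf j m ∈ D := by
  by_contra hm
  have hle : ((SGraph k r i).neighborSet (leaf j m) ∩ D).ncard ≤ k - 1 :=
    calc _ ≤ ((SGraph k r i).neighborSet (leaf j m) \ {center c}).ncard :=
          ncard_le_ncard fun x hx => mem_sdiff_singleton.2 ⟨hx.1, fun hxc => hc (hxc ▸ hx.2)⟩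
      _ = k - 1 := by
          rw [ncard_sdiff_singleton_of_mem (by simp [neighborSet_leaf]), ncard_neighborSet_leaf hk]
  have := hD _ h hm
  omega

lemma sub_one_add_card_hubIndices_le (hk : 1 ≤ k)
    (hW : ∀ v ∈ W, k ≤ ((SGraph k r i).neighborSet v ∩ W).ncard) (hne : W.Nonempty)
    {D : Set (Vertex k r i)} (hD : (SGraph k r i).IsKDomSetOn k W D) :
    k - 1 + (hubIndices W).card ≤ D.ncard := by
  refine le_trans ?_ (ncard_inter_range_center_add_sum_le D (hubIndices W))
  by_cases hc : range center ⊆ D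
  · have hsum := Finset.card_nsmul_le_sum _ _ 1
      fun j hj => one_le_ncard_inter_star hk hD (mem_hubIndices.1 hj)
    rw [smul_eq_mul, mul_one] at hsum
    rw [inter_eq_right.2 hc, ncard_range_of_injective Sum.inl_injective, Nat.card_eq_fintype_card,
      Fintype.card_fin]
    omega
  · obtain ⟨_, ⟨c, rfl⟩, hc⟩ := not_subset.1 hc
    have hstar : ∀ j ∈ hubIndices W, k ≤ (D ∩ star j).ncard := fun j hj =>
      calc k ≤ ((SGraph k r i).neighborSet (hub j) ∩ W).ncard := hW _ (mem_hubIndices.1 hj)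
        _ ≤ (D ∩ star j).ncard := ncard_le_ncard fun x ⟨hx, hxW⟩ => by
          rw [neighborSet_hub] at hx
          obtain ⟨m, rfl⟩ := hx
          exact ⟨leaf_mem_of_center_notMem hk hD hc hxW, leaf_mem_star j m⟩
    have hsum := Finset.card_nsmul_le_sum _ _ k hstar
    rw [smul_eq_mul] at hsum
    obtain ⟨j, m, h⟩ := exists_leaf_mem hk hW hne
    have := Finset.card_pos.2 ⟨j, mem_hubIndices.2 (hub_mem_of_leaf_mem hk hW h)⟩
    zify [hk] at hsum ⊢
    nlinarith

lemma kdomNum_one_induce (hk : 2 ≤ k)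
    (hW : ∀ v ∈ W, k ≤ ((SGraph k r i).neighborSet v ∩ W).ncard) (hne : W.Nonempty) :
    kdomNum ((SGraph k r i).induce W) 1 = (hubIndices W).card + 1 := by
  obtain ⟨j, m, h⟩ := exists_leaf_mem (by omega) hW hne
  refine SimpleGraph.kdomNum_induce_eq _ ⟨_, insert_subset h inter_subset_left,
    isKDomSetOn_one_insert_leaf (by omega) hW j m, ?_⟩
    fun D hDW hD => card_hubIndices_add_one_le hk hW hne hDW hD
  rw [ncard_insert_of_notMem (by simp), ncard_inter_range_hub]

lemma kdomNum_induce (hk : 1 ≤ k)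
    (hW : ∀ v ∈ W, k ≤ ((SGraph k r i).neighborSet v ∩ W).ncard) (hne : W.Nonempty) :
    kdomNum ((SGraph k r i).induce W) k = k - 1 + (hubIndices W).card := by
  refine SimpleGraph.kdomNum_induce_eq _
    ⟨_, union_subset (range_subset_iff.2 (center_mem hk hW hne)) inter_subset_left,
      isKDomSetOn_range_center_union hk hW, ?_⟩
    fun D _ hD => sub_one_add_card_hubIndices_le hk hW hne hD
  rw [ncard_union_eq (by simp [disjoint_left]), ncard_range_of_injective Sum.inl_injective,
    Nat.card_eq_fintype_card, Fintype.card_fin, ncard_inter_range_hub]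

end Induced

end SGraph

/-- For all `k ≥ 2`, `r ≥ 1` and `i_j ≥ k`, the graph `G = S_k(i_1, …, i_r)`
is `(γ, γ_k)`-perfect: `G` has minimum degree at least `k`, and every
nonempty connected induced subgraph `H` of `G` with minimum degree at least
`k` satisfies `γ_k(H) = γ(H) + k − 2`. -/
theorem statement15 (k r : ℕ) (hk : 2 ≤ k) (hr : 1 ≤ r)
    (i : Fin r → ℕ) (hi : ∀ j, k ≤ i j) :
    (∀ v, k ≤ ((SGraph k r i).neighborSet v).ncard) ∧
    ∀ W : Set (Fin (k - 1) ⊕ (Fin r ⊕ (Σ j : Fin r, Fin (i j)))),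
      W.Nonempty → ((SGraph k r i).induce W).Connected →
      (∀ v, k ≤ (((SGraph k r i).induce W).neighborSet v).ncard) →
      kdomNum ((SGraph k r i).induce W) k
        = kdomNum ((SGraph k r i).induce W) 1 + (k - 2) := by
  refine ⟨SGraph.le_ncard_neighborSet (by omega) hr hi, fun W hne _ hdeg => ?_⟩
  have hW : ∀ v ∈ W, k ≤ ((SGraph k r i).neighborSet v ∩ W).ncard := fun v hv => by
    simpa only [SimpleGraph.ncard_neighborSet_induce] using hdeg ⟨v, hv⟩
  rw [SGraph.kdomNum_induce (by omega) hW hne, SGraph.kdomNum_one_induce hk hW hne]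
  omega
end
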